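/- Let D be a bounded domain in ℝⁿ and let h₁, h₂ : ℝⁿ → ℝ be L-Lipschitz functions with h₂ ≤ h₁ on D and h₁ = h₂ = 0 on ℝⁿ∖D. Define H on ℝ^{n+1}∖cl(D×{0}) by H(x,z) = (x, z + h₁(x)) if x ∈ cl(D) and z > 0, H(x,z) = (x, z + h₂(x)) if x ∈ cl(D) and z < 0, and H(x,z) = (x,z) if x ∉ cl(D). Then H is a homeomorphism from the slit domain ℝ^{n+1}∖(cl(D)×{0}) onto ℝ^{n+1}∖{(x,z) : x ∈ cl(D), h₂(x) ≤ z ≤ h₁(x)}, and H is (L+2)-bi-Lipschitz on each of the two open half-spaces {(x,z) : z > 0} and {(x,z) : z < 0}; in particular H is locally (L+2)-bi-Lipschitz. -/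

import Mathlib

open Metric Set

noncomputable section

/-- Euclidean n-space. -/
abbrev En (n : ℕ) : Type := EuclideanSpace ℝ (Fin n)
/-- ℝ^{n+1}, realized as the L²-product ℝⁿ × ℝ (so that the metric is Euclidean). -/
abbrev Pn (n : ℕ) : Type := WithLp 2 (En n × ℝ)

def mkP {n : ℕ} (x : En n) (z : ℝ) : Pn n := (WithLp.equiv 2 (En n × ℝ)).symm (x, z)
def fstP {n : ℕ} (p : Pn n) : En n := ((WithLp.equiv 2 (En n × ℝ)) p).1
def sndP {n : ℕ} (p : Pn n) : ℝ := ((WithLp.equiv 2 (En n × ℝ)) p).2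

open Classical in
/-- The unfolding map H of Lemma 4.4. -/
def Hmap {n : ℕ} (D : Set (En n)) (h₁ h₂ : En n → ℝ) (p : Pn n) : Pn n :=
  if fstP p ∈ closure D then
    (if 0 < sndP p then mkP (fstP p) (sndP p + h₁ (fstP p))
     else if sndP p < 0 then mkP (fstP p) (sndP p + h₂ (fstP p))
     else p)
  else p

/-! On the open upper half-space `Hmap` is the shear `(x, z) ↦ (x, z + h₁ x)`, on the open lower
half-space the shear by `h₂`, and off `closure D × ℝ` the identity, i.e. the shear by `0`, since
`h₁ = h₂ = 0` there. A shear by a `K`-Lipschitz function is `(K + 1)`-Lipschitz and its inverse is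
the shear by the negated function, so it is `(K + 1)`-bi-Lipschitz. The inverse of `Hmap` is glued
from the inverse shears along the graphs of `h₁` and `h₂`; since `h₂ ≤ h₁`, both maps are locally
shears on their domains, which gives continuity and the local bi-Lipschitz bound. -/

section Shear

variable {n : ℕ}

@[simp] lemma fstP_mkP (x : En n) (z : ℝ) : fstP (mkP x z) = x := rfl
@[simp] lemma sndP_mkP (x : En n) (z : ℝ) : sndP (mkP x z) = z := rfl
@[simp] lemma mkP_fstP_sndP (p : Pn n) : mkP (fstP p) (sndP p) = p := rfl

lemma lipschitzWith_fstP : LipschitzWith 1 (fstP (n := n)) :=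
  LipschitzWith.mk_one fun p q => WithLp.dist_fst_le p q

lemma lipschitzWith_sndP : LipschitzWith 1 (sndP (n := n)) :=
  LipschitzWith.mk_one fun p q => WithLp.dist_snd_le p q

lemma isometry_mkP_zero : Isometry (mkP (0 : En n)) :=
  Isometry.of_dist_eq fun _ _ => WithLp.dist_toLp_snd 2 (En n) ℝ _ _

lemma continuous_mkP {α : Type*} [TopologicalSpace α] {f : α → En n} {g : α → ℝ}
    (hf : Continuous f) (hg : Continuous g) : Continuous fun a => mkP (f a) (g a) :=
  (WithLp.prod_continuous_toLp _ _ _).comp (hf.prodMk hg)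

def shear (h : En n → ℝ) (p : Pn n) : Pn n := mkP (fstP p) (sndP p + h (fstP p))

@[simp] lemma fstP_shear (h : En n → ℝ) (p : Pn n) : fstP (shear h p) = fstP p := rfl
@[simp] lemma sndP_shear (h : En n → ℝ) (p : Pn n) :
    sndP (shear h p) = sndP p + h (fstP p) := rfl

lemma shear_neg_shear (h : En n → ℝ) (p : Pn n) : shear (-h) (shear h p) = p := by
  simp [shear]

lemma shear_shear_neg (h : En n → ℝ) (p : Pn n) : shear h (shear (-h) p) = p := by
  simpa using shear_neg_shear (-h) p

lemma shear_of_eq_zero {h : En n → ℝ} {p : Pn n} (hp : h (fstP p) = 0) : shear h p = p := by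
  simp [shear, hp]

lemma shear_eq_add (h : En n → ℝ) (p : Pn n) : shear h p = p + mkP 0 (h (fstP p)) := by
  refine WithLp.ofLp_injective 2 (Prod.ext ?_ ?_) <;> simp [shear, mkP, fstP, sndP]

lemma continuous_shear {h : En n → ℝ} (hh : Continuous h) : Continuous (shear h) :=
  continuous_mkP lipschitzWith_fstP.continuous
    (lipschitzWith_sndP.continuous.add (hh.comp lipschitzWith_fstP.continuous))

lemma lipschitzWith_shear {K : NNReal} {h : En n → ℝ} (hh : LipschitzWith K h) :
    LipschitzWith (K + 1) (shear h) := by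
  have := LipschitzWith.id.add ((isometry_mkP_zero.lipschitz.comp hh).comp lipschitzWith_fstP)
  simp only [one_mul, mul_one, add_comm 1 K] at this
  rw [funext (shear_eq_add h)]
  exact this

lemma antilipschitzWith_shear {K : NNReal} {h : En n → ℝ} (hh : LipschitzWith K h) :
    AntilipschitzWith (K + 1) (shear h) :=
  (lipschitzWith_shear hh.neg).to_rightInverse (shear_neg_shear h)

end Shear

section BiLipschitz

variable {α β : Type*} [PseudoMetricSpace α] [PseudoMetricSpace β]

def BiLipschitzOnWith (C : ℝ) (f : α → β) (s : Set α) : Prop :=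
  ∀ p ∈ s, ∀ q ∈ s, C⁻¹ * dist p q ≤ dist (f p) (f q) ∧ dist (f p) (f q) ≤ C * dist p q

lemma BiLipschitzOnWith.congr {C : ℝ} {f g : α → β} {s : Set α}
    (hg : BiLipschitzOnWith C g s) (hfg : EqOn f g s) : BiLipschitzOnWith C f s := by
  intro p hp q hq
  rw [hfg hp, hfg hq]
  exact hg p hp q hq

lemma BiLipschitzOnWith.weaken {C C' : ℝ} {f : α → β} {s : Set α}
    (hf : BiLipschitzOnWith C f s) (hC : 0 < C) (hCC' : C ≤ C') : BiLipschitzOnWith C' f s := by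
  intro p hp q hq
  obtain ⟨hlower, hupper⟩ := hf p hp q hq
  exact ⟨le_trans (by gcongr) hlower, hupper.trans (by gcongr)⟩

lemma LipschitzWith.biLipschitzOnWith {K : NNReal} {f : α → β} (hf : LipschitzWith K f)
    (hf' : AntilipschitzWith K f) (s : Set α) : BiLipschitzOnWith K f s :=
  fun p _ q _ => ⟨NNReal.coe_inv K ▸ hf'.mul_le_dist p q, hf.dist_le_mul p q⟩

end BiLipschitz

lemma biLipschitzOnWith_shear {n : ℕ} {L : ℝ} (hL : 0 ≤ L) {h : En n → ℝ}
    (hh : LipschitzWith L.toNNReal h) (s : Set (Pn n)) :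
    BiLipschitzOnWith (L + 2) (shear h) s := by
  refine ((lipschitzWith_shear hh).biLipschitzOnWith (antilipschitzWith_shear hh) s).weaken
    (by positivity) ?_
  simp [Real.coe_toNNReal L hL]

section Unfolding

open Filter Topology

variable {n : ℕ} {D : Set (En n)} {h₁ h₂ : En n → ℝ}

def slitDomain (D : Set (En n)) : Set (Pn n) := {p | ¬ (fstP p ∈ closure D ∧ sndP p = 0)}

def unfoldedDomain (D : Set (En n)) (h₁ h₂ : En n → ℝ) : Set (Pn n) :=
  {p | ¬ (fstP p ∈ closure D ∧ h₂ (fstP p) ≤ sndP p ∧ sndP p ≤ h₁ (fstP p))}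

def unfoldInv (h₁ h₂ : En n → ℝ) (q : Pn n) : Pn n :=
  if h₁ (fstP q) < sndP q then shear (-h₁) q
  else if sndP q < h₂ (fstP q) then shear (-h₂) q
  else q

lemma eq_zero_of_notMem_closure {h : En n → ℝ} (hz : ∀ x ∉ D, h x = 0) {x : En n}
    (hx : x ∉ closure D) : h x = 0 :=
  hz x fun hD => hx (subset_closure hD)

lemma isOpen_fstP_notMem_closure (D : Set (En n)) : IsOpen {p : Pn n | fstP p ∉ closure D} :=
  isClosed_closure.isOpen_compl.preimage lipschitzWith_fstP.continuous

lemma Hmap_of_notMem_closure {p : Pn n} (hp : fstP p ∉ closure D) : Hmap D h₁ h₂ p = p := by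
  simp [Hmap, hp]

lemma Hmap_of_pos (hz1 : ∀ x ∉ D, h₁ x = 0) {p : Pn n} (hp : 0 < sndP p) :
    Hmap D h₁ h₂ p = shear h₁ p := by
  by_cases hx : fstP p ∈ closure D
  · simp [Hmap, hx, hp, shear]
  · rw [Hmap_of_notMem_closure hx, shear_of_eq_zero (eq_zero_of_notMem_closure hz1 hx)]

lemma Hmap_of_neg (hz2 : ∀ x ∉ D, h₂ x = 0) {p : Pn n} (hp : sndP p < 0) :
    Hmap D h₁ h₂ p = shear h₂ p := by
  by_cases hx : fstP p ∈ closure D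
  · simp [Hmap, hx, hp, hp.not_gt, shear]
  · rw [Hmap_of_notMem_closure hx, shear_of_eq_zero (eq_zero_of_notMem_closure hz2 hx)]

lemma unfoldInv_of_gt {q : Pn n} (hq : h₁ (fstP q) < sndP q) :
    unfoldInv h₁ h₂ q = shear (-h₁) q := by
  simp [unfoldInv, hq]

lemma unfoldInv_of_lt (hle : ∀ x, h₂ x ≤ h₁ x) {q : Pn n} (hq : sndP q < h₂ (fstP q)) :
    unfoldInv h₁ h₂ q = shear (-h₂) q := by
  simp [unfoldInv, hq, (hq.trans_le (hle _)).not_gt]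

lemma unfoldInv_of_eq_zero {q : Pn n} (e₁ : h₁ (fstP q) = 0) (e₂ : h₂ (fstP q) = 0) :
    unfoldInv h₁ h₂ q = q := by
  have e₁' : (-h₁) (fstP q) = 0 := by simp [e₁]
  have e₂' : (-h₂) (fstP q) = 0 := by simp [e₂]
  simp only [unfoldInv, shear_of_eq_zero e₁', shear_of_eq_zero e₂', ite_self]

lemma unfoldInv_Hmap (hle : ∀ x, h₂ x ≤ h₁ x) (hz1 : ∀ x ∉ D, h₁ x = 0)
    (hz2 : ∀ x ∉ D, h₂ x = 0) {p : Pn n} (hp : p ∈ slitDomain D) :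
    unfoldInv h₁ h₂ (Hmap D h₁ h₂ p) = p := by
  rcases lt_trichotomy (sndP p) 0 with hz | hz | hz
  · rw [Hmap_of_neg hz2 hz, unfoldInv_of_lt hle (by simpa using hz), shear_neg_shear]
  · have hx : fstP p ∉ closure D := fun hx => hp ⟨hx, hz⟩
    rw [Hmap_of_notMem_closure hx, unfoldInv_of_eq_zero (eq_zero_of_notMem_closure hz1 hx)
      (eq_zero_of_notMem_closure hz2 hx)]
  · rw [Hmap_of_pos hz1 hz, unfoldInv_of_gt (by simpa using hz), shear_neg_shear]

lemma Hmap_unfoldInv (hle : ∀ x, h₂ x ≤ h₁ x) (hz1 : ∀ x ∉ D, h₁ x = 0)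
    (hz2 : ∀ x ∉ D, h₂ x = 0) {q : Pn n} (hq : q ∈ unfoldedDomain D h₁ h₂) :
    Hmap D h₁ h₂ (unfoldInv h₁ h₂ q) = q := by
  by_cases c₁ : h₁ (fstP q) < sndP q
  · rw [unfoldInv_of_gt c₁, Hmap_of_pos hz1 (by simpa using c₁), shear_shear_neg]
  by_cases c₂ : sndP q < h₂ (fstP q)
  · rw [unfoldInv_of_lt hle c₂, Hmap_of_neg hz2 (by simpa using c₂), shear_shear_neg]
  have hx : fstP q ∉ closure D := fun hx => hq ⟨hx, not_lt.1 c₂, not_lt.1 c₁⟩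
  rw [unfoldInv_of_eq_zero (eq_zero_of_notMem_closure hz1 hx) (eq_zero_of_notMem_closure hz2 hx),
    Hmap_of_notMem_closure hx]

lemma mapsTo_Hmap (hz1 : ∀ x ∉ D, h₁ x = 0) (hz2 : ∀ x ∉ D, h₂ x = 0) :
    MapsTo (Hmap D h₁ h₂) (slitDomain D) (unfoldedDomain D h₁ h₂) := by
  intro p hp ⟨hin, hlower, hupper⟩
  rcases lt_trichotomy (sndP p) 0 with hz | hz | hz
  · rw [Hmap_of_neg hz2 hz, sndP_shear, fstP_shear] at hlower
    linarith
  · have hx : fstP p ∉ closure D := fun hx => hp ⟨hx, hz⟩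
    rw [Hmap_of_notMem_closure hx] at hin
    exact hx hin
  · rw [Hmap_of_pos hz1 hz, sndP_shear, fstP_shear] at hupper
    linarith

lemma mapsTo_unfoldInv (hle : ∀ x, h₂ x ≤ h₁ x) :
    MapsTo (unfoldInv h₁ h₂) (unfoldedDomain D h₁ h₂) (slitDomain D) := by
  intro q hq ⟨hin, hzero⟩
  by_cases c₁ : h₁ (fstP q) < sndP q
  · rw [unfoldInv_of_gt c₁, sndP_shear, Pi.neg_apply] at hzero
    linarith
  by_cases c₂ : sndP q < h₂ (fstP q)
  · rw [unfoldInv_of_lt hle c₂, sndP_shear, Pi.neg_apply] at hzero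
    linarith
  simp only [unfoldInv, c₁, c₂, if_false] at hin
  exact hq ⟨hin, not_lt.1 c₂, not_lt.1 c₁⟩

lemma bijOn_Hmap (hle : ∀ x, h₂ x ≤ h₁ x) (hz1 : ∀ x ∉ D, h₁ x = 0)
    (hz2 : ∀ x ∉ D, h₂ x = 0) :
    BijOn (Hmap D h₁ h₂) (slitDomain D) (unfoldedDomain D h₁ h₂) :=
  InvOn.bijOn ⟨fun _ hp => unfoldInv_Hmap hle hz1 hz2 hp, fun _ hq => Hmap_unfoldInv hle hz1 hz2 hq⟩
    (mapsTo_Hmap hz1 hz2) (mapsTo_unfoldInv hle)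

lemma Hmap_eventuallyEq_shear {K : NNReal} (hlip1 : LipschitzWith K h₁)
    (hlip2 : LipschitzWith K h₂) (hz1 : ∀ x ∉ D, h₁ x = 0) (hz2 : ∀ x ∉ D, h₂ x = 0)
    {p : Pn n} (hp : p ∈ slitDomain D) :
    ∃ h : En n → ℝ, LipschitzWith K h ∧ Hmap D h₁ h₂ =ᶠ[𝓝 p] shear h := by
  rcases lt_trichotomy (sndP p) 0 with hz | hz | hz
  · exact ⟨h₂, hlip2, eventuallyEq_of_mem
      ((isOpen_lt lipschitzWith_sndP.continuous continuous_const).mem_nhds hz)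
      fun _ hq => Hmap_of_neg hz2 hq⟩
  · refine ⟨fun _ => 0, (LipschitzWith.const 0).weaken (zero_le (a := K)), eventuallyEq_of_mem
      ((isOpen_fstP_notMem_closure D).mem_nhds fun hx => hp ⟨hx, hz⟩) fun q hq => ?_⟩
    rw [Hmap_of_notMem_closure hq, shear_of_eq_zero rfl]
  · exact ⟨h₁, hlip1, eventuallyEq_of_mem
      ((isOpen_lt continuous_const lipschitzWith_sndP.continuous).mem_nhds hz)
      fun _ hq => Hmap_of_pos hz1 hq⟩

lemma unfoldInv_eventuallyEq_shear {K : NNReal} (hlip1 : LipschitzWith K h₁)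
    (hlip2 : LipschitzWith K h₂) (hle : ∀ x, h₂ x ≤ h₁ x) (hz1 : ∀ x ∉ D, h₁ x = 0)
    (hz2 : ∀ x ∉ D, h₂ x = 0) {q : Pn n} (hq : q ∈ unfoldedDomain D h₁ h₂) :
    ∃ h : En n → ℝ, LipschitzWith K h ∧ unfoldInv h₁ h₂ =ᶠ[𝓝 q] shear h := by
  have hc₁ := hlip1.continuous.comp lipschitzWith_fstP.continuous
  have hc₂ := hlip2.continuous.comp lipschitzWith_fstP.continuous
  by_cases c₁ : h₁ (fstP q) < sndP q
  · exact ⟨-h₁, hlip1.neg, eventuallyEq_of_mem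
      ((isOpen_lt hc₁ lipschitzWith_sndP.continuous).mem_nhds c₁) fun _ hr => unfoldInv_of_gt hr⟩
  by_cases c₂ : sndP q < h₂ (fstP q)
  · exact ⟨-h₂, hlip2.neg, eventuallyEq_of_mem
      ((isOpen_lt lipschitzWith_sndP.continuous hc₂).mem_nhds c₂)
      fun _ hr => unfoldInv_of_lt hle hr⟩
  have hx : fstP q ∉ closure D := fun hx => hq ⟨hx, not_lt.1 c₂, not_lt.1 c₁⟩
  refine ⟨fun _ => 0, (LipschitzWith.const 0).weaken (zero_le (a := K)), eventuallyEq_of_mem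
    ((isOpen_fstP_notMem_closure D).mem_nhds hx) fun r hr => ?_⟩
  rw [unfoldInv_of_eq_zero (eq_zero_of_notMem_closure hz1 hr) (eq_zero_of_notMem_closure hz2 hr),
    shear_of_eq_zero rfl]

lemma continuousOn_of_eventuallyEq_shear {f : Pn n → Pn n} {s : Set (Pn n)}
    (hf : ∀ p ∈ s, ∃ h : En n → ℝ, Continuous h ∧ f =ᶠ[𝓝 p] shear h) : ContinuousOn f s :=
  fun p hp =>
    let ⟨_, hh, hfh⟩ := hf p hp
    ((continuous_shear hh).continuousAt.congr hfh.symm).continuousWithinAt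

lemma continuousOn_Hmap {K : NNReal} (hlip1 : LipschitzWith K h₁) (hlip2 : LipschitzWith K h₂)
    (hz1 : ∀ x ∉ D, h₁ x = 0) (hz2 : ∀ x ∉ D, h₂ x = 0) :
    ContinuousOn (Hmap D h₁ h₂) (slitDomain D) :=
  continuousOn_of_eventuallyEq_shear fun _ hp =>
    let ⟨h, hh, hfh⟩ := Hmap_eventuallyEq_shear hlip1 hlip2 hz1 hz2 hp
    ⟨h, hh.continuous, hfh⟩

lemma continuousOn_unfoldInv {K : NNReal} (hlip1 : LipschitzWith K h₁)
    (hlip2 : LipschitzWith K h₂) (hle : ∀ x, h₂ x ≤ h₁ x) (hz1 : ∀ x ∉ D, h₁ x = 0)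
    (hz2 : ∀ x ∉ D, h₂ x = 0) :
    ContinuousOn (unfoldInv h₁ h₂) (unfoldedDomain D h₁ h₂) :=
  continuousOn_of_eventuallyEq_shear fun _ hq =>
    let ⟨h, hh, hfh⟩ := unfoldInv_eventuallyEq_shear hlip1 hlip2 hle hz1 hz2 hq
    ⟨h, hh.continuous, hfh⟩

lemma exists_ball_biLipschitzOnWith_Hmap {L : ℝ} (hL : 0 ≤ L)
    (hlip1 : LipschitzWith L.toNNReal h₁) (hlip2 : LipschitzWith L.toNNReal h₂)
    (hz1 : ∀ x ∉ D, h₁ x = 0) (hz2 : ∀ x ∉ D, h₂ x = 0) {p : Pn n} (hp : p ∈ slitDomain D) :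
    ∃ s > (0 : ℝ), BiLipschitzOnWith (L + 2) (Hmap D h₁ h₂) (ball p s ∩ slitDomain D) := by
  obtain ⟨h, hh, hfh⟩ := Hmap_eventuallyEq_shear hlip1 hlip2 hz1 hz2 hp
  obtain ⟨s, hs, hball⟩ := Metric.eventually_nhds_iff_ball.1 hfh
  exact ⟨s, hs, (biLipschitzOnWith_shear hL hh _).congr fun q hq => hball q hq.1⟩

end Unfolding

theorem stmt13_general {n : ℕ} (D : Set (En n)) (L : ℝ) (hL : 0 ≤ L) (h₁ h₂ : En n → ℝ)
    (hlip1 : LipschitzWith (Real.toNNReal L) h₁)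
    (hlip2 : LipschitzWith (Real.toNNReal L) h₂)
    (hle : ∀ x ∈ D, h₂ x ≤ h₁ x)
    (hz1 : ∀ x ∉ D, h₁ x = 0) (hz2 : ∀ x ∉ D, h₂ x = 0) :
    -- the slit domain, the target domain, and the two open half-spaces
    (Set.BijOn (Hmap D h₁ h₂)
        {p : Pn n | ¬ (fstP p ∈ closure D ∧ sndP p = 0)}
        {p : Pn n | ¬ (fstP p ∈ closure D ∧ h₂ (fstP p) ≤ sndP p ∧ sndP p ≤ h₁ (fstP p))}) ∧
    ContinuousOn (Hmap D h₁ h₂) {p : Pn n | ¬ (fstP p ∈ closure D ∧ sndP p = 0)} ∧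
    (∃ Hinv : Pn n → Pn n,
      ContinuousOn Hinv
        {p : Pn n | ¬ (fstP p ∈ closure D ∧ h₂ (fstP p) ≤ sndP p ∧ sndP p ≤ h₁ (fstP p))} ∧
      ∀ p ∈ {p : Pn n | ¬ (fstP p ∈ closure D ∧ sndP p = 0)}, Hinv (Hmap D h₁ h₂ p) = p) ∧
    (∀ p ∈ {q : Pn n | 0 < sndP q}, ∀ q ∈ {q : Pn n | 0 < sndP q},
      (L + 2)⁻¹ * dist p q ≤ dist (Hmap D h₁ h₂ p) (Hmap D h₁ h₂ q) ∧
        dist (Hmap D h₁ h₂ p) (Hmap D h₁ h₂ q) ≤ (L + 2) * dist p q) ∧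
    (∀ p ∈ {q : Pn n | sndP q < 0}, ∀ q ∈ {q : Pn n | sndP q < 0},
      (L + 2)⁻¹ * dist p q ≤ dist (Hmap D h₁ h₂ p) (Hmap D h₁ h₂ q) ∧
        dist (Hmap D h₁ h₂ p) (Hmap D h₁ h₂ q) ≤ (L + 2) * dist p q) ∧
    (∀ p ∈ {p : Pn n | ¬ (fstP p ∈ closure D ∧ sndP p = 0)}, ∃ s > (0:ℝ),
      ∀ q ∈ ball p s ∩ {p : Pn n | ¬ (fstP p ∈ closure D ∧ sndP p = 0)},
        ∀ q' ∈ ball p s ∩ {p : Pn n | ¬ (fstP p ∈ closure D ∧ sndP p = 0)},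
          (L + 2)⁻¹ * dist q q' ≤ dist (Hmap D h₁ h₂ q) (Hmap D h₁ h₂ q') ∧
            dist (Hmap D h₁ h₂ q) (Hmap D h₁ h₂ q') ≤ (L + 2) * dist q q') := by
  have hle' : ∀ x, h₂ x ≤ h₁ x := fun x => by
    by_cases hx : x ∈ D
    · exact hle x hx
    · rw [hz1 x hx, hz2 x hx]
  exact ⟨bijOn_Hmap hle' hz1 hz2, continuousOn_Hmap hlip1 hlip2 hz1 hz2,
    ⟨unfoldInv h₁ h₂, continuousOn_unfoldInv hlip1 hlip2 hle' hz1 hz2,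
      fun _ hp => unfoldInv_Hmap hle' hz1 hz2 hp⟩,
    (biLipschitzOnWith_shear hL hlip1 _).congr fun _ hq => Hmap_of_pos hz1 hq,
    (biLipschitzOnWith_shear hL hlip2 _).congr fun _ hq => Hmap_of_neg hz2 hq,
    fun _ hp => exists_ball_biLipschitzOnWith_Hmap hL hlip1 hlip2 hz1 hz2 hp⟩

/-- Lemma 4.4: H is a homeomorphism from the slit domain ℝ^{n+1}∖(cl(D)×{0}) onto the
complement of the region between the graphs of h₂ and h₁ over cl(D), and H is
(L+2)-bi-Lipschitz on each open half-space; in particular H is locally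
(L+2)-bi-Lipschitz. -/
theorem stmt13 {n : ℕ} (D : Set (En n)) (hD : IsOpen D) (hDc : IsConnected D)
    (hDb : Bornology.IsBounded D) (L : ℝ) (hL : 0 ≤ L) (h₁ h₂ : En n → ℝ)
    (hlip1 : LipschitzWith (Real.toNNReal L) h₁)
    (hlip2 : LipschitzWith (Real.toNNReal L) h₂)
    (hle : ∀ x ∈ D, h₂ x ≤ h₁ x)
    (hz1 : ∀ x ∉ D, h₁ x = 0) (hz2 : ∀ x ∉ D, h₂ x = 0) :
    -- the slit domain, the target domain, and the two open half-spaces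
    (Set.BijOn (Hmap D h₁ h₂)
        {p : Pn n | ¬ (fstP p ∈ closure D ∧ sndP p = 0)}
        {p : Pn n | ¬ (fstP p ∈ closure D ∧ h₂ (fstP p) ≤ sndP p ∧ sndP p ≤ h₁ (fstP p))}) ∧
    ContinuousOn (Hmap D h₁ h₂) {p : Pn n | ¬ (fstP p ∈ closure D ∧ sndP p = 0)} ∧
    (∃ Hinv : Pn n → Pn n,
      ContinuousOn Hinv
        {p : Pn n | ¬ (fstP p ∈ closure D ∧ h₂ (fstP p) ≤ sndP p ∧ sndP p ≤ h₁ (fstP p))} ∧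
      ∀ p ∈ {p : Pn n | ¬ (fstP p ∈ closure D ∧ sndP p = 0)}, Hinv (Hmap D h₁ h₂ p) = p) ∧
    (∀ p ∈ {q : Pn n | 0 < sndP q}, ∀ q ∈ {q : Pn n | 0 < sndP q},
      (L + 2)⁻¹ * dist p q ≤ dist (Hmap D h₁ h₂ p) (Hmap D h₁ h₂ q) ∧
        dist (Hmap D h₁ h₂ p) (Hmap D h₁ h₂ q) ≤ (L + 2) * dist p q) ∧
    (∀ p ∈ {q : Pn n | sndP q < 0}, ∀ q ∈ {q : Pn n | sndP q < 0},
      (L + 2)⁻¹ * dist p q ≤ dist (Hmap D h₁ h₂ p) (Hmap D h₁ h₂ q) ∧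
        dist (Hmap D h₁ h₂ p) (Hmap D h₁ h₂ q) ≤ (L + 2) * dist p q) ∧
    (∀ p ∈ {p : Pn n | ¬ (fstP p ∈ closure D ∧ sndP p = 0)}, ∃ s > (0:ℝ),
      ∀ q ∈ ball p s ∩ {p : Pn n | ¬ (fstP p ∈ closure D ∧ sndP p = 0)},
        ∀ q' ∈ ball p s ∩ {p : Pn n | ¬ (fstP p ∈ closure D ∧ sndP p = 0)},
          (L + 2)⁻¹ * dist q q' ≤ dist (Hmap D h₁ h₂ q) (Hmap D h₁ h₂ q') ∧
            dist (Hmap D h₁ h₂ q) (Hmap D h₁ h₂ q') ≤ (L + 2) * dist q q') :=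
  stmt13_general D L hL h₁ h₂ hlip1 hlip2 hle hz1 hz2
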